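/- arXiv:1312.5875 — 7 statements merged into one kernel-verified Lean document; each statement's English description precedes it below -/
import Mathlib

section
/- Let G be a totally disconnected, locally compact Hausdorff topological group and α an automorphism of G (a bi-continuous group automorphism). If α is expansive, i.e. there exists an identity neighbourhood U ⊆ G with ⋂_{n ∈ ℤ} αⁿ(U) = {1}, then G is metrizable. -/
/-!
If `K ⊆ U` is a compact identity neighbourhood, the sets `αⁿ(K)`, `n ∈ ℤ`, are compact identity
neighbourhoods whose intersection is `{1}`. By compactness every identity neighbourhood then
contains a finite intersection of them, so the neighbourhood filter of `1` is countably generated,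
and a first-countable Hausdorff group is metrizable (Birkhoff–Kakutani).
-/

open Filter Topology

theorem nhds_eq_iInf_principal_of_iInter_subset {X ι : Type*} [TopologicalSpace X] [T2Space X]
    [Nonempty ι] {x : X} {K : ι → Set X} (hK : ∀ i, K i ∈ 𝓝 x) (hKc : ∀ i, IsCompact (K i))
    (hKx : ⋂ i, K i ⊆ {x}) : 𝓝 x = ⨅ i, 𝓟 (K i) := by
  refine le_antisymm (le_iInf fun i => le_principal_iff.2 (hK i)) ?_
  obtain ⟨i₀⟩ := ‹Nonempty ι›
  refine (hKc i₀).le_nhds_of_unique_clusterPt (mem_iInf_of_mem i₀ (mem_principal_self _))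
    fun y _ hy => hKx (Set.mem_iInter.2 fun i => ?_)
  rw [← (hKc i).isClosed.closure_eq, mem_closure_iff_clusterPt]
  exact hy.mono (iInf_le _ i)

theorem IsTopologicalGroup.metrizableSpace_of_isCountablyGenerated_nhds_one {G : Type*} [Group G]
    [TopologicalSpace G] [IsTopologicalGroup G] [T0Space G] [(𝓝 (1 : G)).IsCountablyGenerated] :
    TopologicalSpace.MetrizableSpace G := by
  let : UniformSpace G := IsTopologicalGroup.rightUniformSpace G
  have : (uniformity G).IsCountablyGenerated := by
    rw [uniformity_eq_comap_nhds_one']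
    exact Filter.comap.isCountablyGenerated _ _
  exact UniformSpace.metrizableSpace

namespace MulAut

variable {G : Type*} [Group G] [TopologicalSpace G] {α : MulAut G}

theorem continuous_zpow (hα : Continuous ⇑α) (hα' : Continuous ⇑α⁻¹) (n : ℤ) :
    Continuous ⇑(α ^ n) := by
  induction n using Int.induction_on with
  | zero => exact continuous_id
  | succ k ih => rw [zpow_add_one]; exact ih.comp hα
  | pred k ih => rw [zpow_sub_one]; exact ih.comp hα'

theorem image_zpow_mem_nhds_one (hα : Continuous ⇑α) (hα' : Continuous ⇑α⁻¹) (n : ℤ)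
    {K : Set G} (hK : K ∈ 𝓝 1) : ⇑(α ^ n) '' K ∈ 𝓝 1 := by
  rw [show ⇑(α ^ n) '' K = ⇑(α ^ n)⁻¹ ⁻¹' K from (α ^ n).toEquiv.image_eq_preimage_symm K,
    ← zpow_neg]
  refine (continuous_zpow hα hα' (-n)).continuousAt.preimage_mem_nhds ?_
  rwa [map_one]

end MulAut

theorem expansive_metrizable_general {G : Type*} [Group G] [TopologicalSpace G]
    [IsTopologicalGroup G] [T2Space G] [LocallyCompactSpace G]
    (α : MulAut G) (hα : Continuous ⇑α) (hα' : Continuous ⇑(α⁻¹))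
    (hexp : ∃ U ∈ 𝓝 (1 : G), ⋂ n : ℤ, ⇑(α ^ n) '' U = {1}) :
    TopologicalSpace.MetrizableSpace G := by
  obtain ⟨U, hU, hUexp⟩ := hexp
  obtain ⟨K, hK, hKU, hKc⟩ := local_compact_nhds hU
  have hnhds : 𝓝 (1 : G) = ⨅ n : ℤ, 𝓟 (⇑(α ^ n) '' K) :=
    nhds_eq_iInf_principal_of_iInter_subset (fun n => α.image_zpow_mem_nhds_one hα hα' n hK)
      (fun n => hKc.image (α.continuous_zpow hα hα' n))
      (hUexp ▸ Set.iInter_mono fun n => Set.image_mono hKU)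
  have : (𝓝 (1 : G)).IsCountablyGenerated := hnhds ▸ isCountablyGenerated_seq _
  exact IsTopologicalGroup.metrizableSpace_of_isCountablyGenerated_nhds_one

/-- An expansive automorphism of a totally disconnected, locally compact group
forces the group to be metrizable. -/
theorem expansive_metrizable {G : Type*} [Group G] [TopologicalSpace G]
    [IsTopologicalGroup G] [T2Space G] [LocallyCompactSpace G] [TotallyDisconnectedSpace G]
    (α : MulAut G) (hα : Continuous ⇑α) (hα' : Continuous ⇑(α⁻¹))
    (hexp : ∃ U ∈ 𝓝 (1 : G), ⋂ n : ℤ, ⇑(α ^ n) '' U = {1}) :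
    TopologicalSpace.MetrizableSpace G :=
  expansive_metrizable_general α hα hα' hexp
end

section
/- Let K be a compact Hausdorff topological group and D ⊆ K a subgroup that is divisible (for every d ∈ D and every m ≥ 1 there exists x ∈ D with xᵐ = d). Then the closure of D in K is also divisible. -/
open Filter Topology

/-! The `m`-th power map sends the compact set `closure D` onto a compact, hence closed, set which
contains `D` by divisibility; so it contains `closure D` as well. -/

theorem IsCompact.closure_subset_image {X Y : Type*} [TopologicalSpace X] [TopologicalSpace Y]
    [T2Space Y] {f : X → Y} (hf : Continuous f) {s : Set X} (hs : IsCompact s) {t : Set Y}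
    (hts : t ⊆ f '' s) : closure t ⊆ f '' s :=
  closure_minimal hts (hs.image hf).isClosed

/-- The closure of a divisible subgroup of a compact Hausdorff group is divisible. -/
theorem closure_divisible {K : Type*} [Group K] [TopologicalSpace K] [IsTopologicalGroup K]
    [T2Space K] [CompactSpace K]
    (D : Subgroup K) (hD : ∀ d ∈ D, ∀ m : ℕ, 0 < m → ∃ x ∈ D, x ^ m = d) :
    ∀ d ∈ closure (D : Set K), ∀ m : ℕ, 0 < m → ∃ x ∈ closure (D : Set K), x ^ m = d := by
  intro d hd m hm
  have hD_sub : (D : Set K) ⊆ (· ^ m) '' closure (D : Set K) := fun y hy ↦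
    let ⟨x, hxD, hxy⟩ := hD y hy m hm
    ⟨x, subset_closure hxD, hxy⟩
  exact IsCompact.closure_subset_image (continuous_pow m) isClosed_closure.isCompact hD_sub hd
end

section
/- Let G be a locally compact Hausdorff group, α an automorphism of G, and H ⊆ G an α-stable subgroup such that α|_H is contractive (αⁿ(h) → 1 for all h ∈ H). If H has a compact neighbourhood of 1 in its closure H̄, then H̄ is σ-compact. -/
/-!
Since `K` is a neighbourhood of `1` in the group `C = closure H`, every element of `C` has the
form `h * k` with `h ∈ H`, `k ∈ K`. Contraction puts `αⁿ h` into `K` for some `n`, so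
`h ∈ α⁻ⁿ K`, and `C` is the countable union of the compact sets `(α⁻ⁿ K ∩ C) * K`.
-/

open Filter Topology Set Pointwise

theorem MulAut.coe_pow {M : Type*} [Mul M] (α : MulAut M) (n : ℕ) :
    ⇑(α ^ n) = (⇑α)^[n] := by
  induction n with
  | zero => rfl
  | succ n ih => rw [pow_succ, Function.iterate_succ, ← ih]; rfl

theorem MulAut.preimage_pow_eq_image_inv_pow {M : Type*} [Mul M] (α : MulAut M) (s : Set M)
    (n : ℕ) : (α ^ n) ⁻¹' s = ⇑(α⁻¹ ^ n) '' s := by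
  rw [inv_pow]
  exact ((α ^ n).toEquiv.image_symm_eq_preimage s).symm

theorem MulAut.isCompact_preimage_pow {M : Type*} [Mul M] [TopologicalSpace M] (α : MulAut M)
    (hα' : Continuous ⇑α⁻¹) {K : Set M} (hK : IsCompact K) (n : ℕ) :
    IsCompact ((α ^ n) ⁻¹' K) := by
  rw [α.preimage_pow_eq_image_inv_pow, coe_pow]
  exact hK.image (hα'.iterate n)

theorem subset_iUnion_preimage_of_tendsto {X : Type*} [TopologicalSpace X] {f : ℕ → X → X}
    {s K : Set X} {a : X} (hs : ∀ n, MapsTo (f n) s s)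
    (hf : ∀ x ∈ s, Tendsto (f · x) atTop (𝓝 a)) (hK : K ∈ 𝓝[s] a) :
    s ⊆ ⋃ n, f n ⁻¹' K := fun x hx ↦
  mem_iUnion.2 <| (tendsto_nhdsWithin_iff.2 ⟨hf x hx, .of_forall fun n ↦ hs n hx⟩
    |>.eventually_mem hK).exists

theorem IsSigmaCompact.mul_isCompact {M : Type*} [Mul M] [TopologicalSpace M] [ContinuousMul M]
    {s t : Set M} (hs : IsSigmaCompact s) (ht : IsCompact t) : IsSigmaCompact (s * t) := by
  obtain ⟨S, hS, rfl⟩ := hs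
  rw [iUnion_mul]
  exact isSigmaCompact_iUnion_of_isCompact _ fun n ↦ (hS n).mul ht

theorem Subgroup.topologicalClosure_subset_mul_of_mem_nhdsWithin {G : Type*} [Group G]
    [TopologicalSpace G] [IsTopologicalGroup G] (H : Subgroup G) {K : Set G}
    (hK : K ∈ 𝓝[H.topologicalClosure] 1) : (H.topologicalClosure : Set G) ⊆ H * K := by
  obtain ⟨V, hV, hVK⟩ := mem_nhdsWithin_iff_exists_mem_nhds_inter.1 hK
  have hW : V ∩ V⁻¹ ∈ 𝓝 (1 : G) := Filter.inter_mem hV (inv_mem_nhds_one G hV)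
  intro x hx
  obtain ⟨h, hh, w, hw, rfl⟩ := closure_subset_mul_right_of_mem_nhds_one_of_inv _ hW
    (fun w hw ↦ ⟨hw.2, by simpa using hw.1⟩) hx
  -- `w = h⁻¹ * x` lies in the subgroup `closure H`, hence in `V ∩ closure H ⊆ K`.
  have hwC : w ∈ H.topologicalClosure := by
    simpa using H.topologicalClosure.mul_mem (H.le_topologicalClosure (H.inv_mem hh)) hx
  exact mul_mem_mul hh (hVK ⟨hw.1, hwC⟩)

theorem closure_contraction_sigmaCompact_general {G : Type*} [Group G] [TopologicalSpace G]
    [IsTopologicalGroup G]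
    (α : MulAut G) (hα' : Continuous ⇑(α⁻¹))
    (H : Subgroup G) (hst : ⇑α '' (H : Set G) = (H : Set G))
    (hc : ∀ h ∈ H, Tendsto (fun n : ℕ => (α ^ n) h) atTop (𝓝 1))
    (K : Set G) (hKc : IsCompact K) (hKsub : K ⊆ closure (H : Set G))
    (hKnhd : K ∈ 𝓝[closure (H : Set G)] (1 : G)) :
    IsSigmaCompact (closure (H : Set G)) := by
  set C := closure (H : Set G)
  have hH : (H : Set G) ⊆ ⋃ n : ℕ, (α ^ n) ⁻¹' K :=
    subset_iUnion_preimage_of_tendsto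
      (fun n ↦ α.coe_pow n ▸ (mapsTo_iff_image_subset.2 hst.subset).iterate n)
      hc (nhdsWithin_mono _ subset_closure hKnhd)
  have hS : IsSigmaCompact (⋃ n : ℕ, (α ^ n) ⁻¹' K ∩ C) :=
    isSigmaCompact_iUnion_of_isCompact _ fun n ↦
      (α.isCompact_preimage_pow hα' hKc n).inter_right isClosed_closure
  suffices C = (⋃ n : ℕ, (α ^ n) ⁻¹' K ∩ C) * K from this ▸ hS.mul_isCompact hKc
  refine subset_antisymm ?_ ?_
  · calc C ⊆ H * K := H.topologicalClosure_subset_mul_of_mem_nhdsWithin hKnhd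
      _ ⊆ _ := by
        rw [← iUnion_inter]
        exact mul_subset_mul_right (subset_inter hH subset_closure)
  · rintro _ ⟨y, hy, k, hk, rfl⟩
    exact H.topologicalClosure.mul_mem (iUnion_subset (fun _ ↦ inter_subset_right) hy) (hKsub hk)

/-- If H is an α-stable subgroup of a locally compact group on which α is contractive,
and the closure of H contains a compact neighbourhood of 1 (relative to the closure),
then the closure of H is σ-compact. -/
theorem closure_contraction_sigmaCompact {G : Type*} [Group G] [TopologicalSpace G]
    [IsTopologicalGroup G] [T2Space G] [LocallyCompactSpace G]
    (α : MulAut G) (hα : Continuous ⇑α) (hα' : Continuous ⇑(α⁻¹))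
    (H : Subgroup G) (hst : ⇑α '' (H : Set G) = (H : Set G))
    (hc : ∀ h ∈ H, Tendsto (fun n : ℕ => (α ^ n) h) atTop (𝓝 1))
    (K : Set G) (hKc : IsCompact K) (hKsub : K ⊆ closure (H : Set G))
    (hKnhd : K ∈ 𝓝[closure (H : Set G)] (1 : G)) :
    IsSigmaCompact (closure (H : Set G)) :=
  closure_contraction_sigmaCompact_general α hα' H hst hc K hKc hKsub hKnhd
end

section
/- Let G be a totally disconnected, locally compact group and α an expansive automorphism. Let V ⊆ G be a compact open subgroup with ⋂_{n ∈ ℤ} αⁿ(V) = {1}, and set V₋ := ⋂_{n ≥ 0} α⁻ⁿ(V). Then for every n ∈ ℕ, αⁿ(V₋) is an open subgroup of V₋, and the family {αⁿ(V₋) : n ∈ ℕ} is a neighbourhood basis at the identity in V₋. -/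
/-!
Applying `αⁿ` to `V₋ = ⋂_{m ≥ 0} α⁻ᵐ(V)` gives `⋂_{j ≤ n} αʲ(V)`, which is `V₋` cut down by the
finitely many open sets `αʲ(V)`, `0 < j ≤ n`; hence `αⁿ(V₋)` is relatively open in `V₋`. These
sets are compact and decrease to `⋂_{j ∈ ℤ} αʲ(V) = {1}`, so by compactness they eventually lie
in any neighbourhood of `1`.
-/

open Filter Topology Set

namespace MulAut
variable {G : Type*} [Group G]

theorem continuous_coe_zpow [TopologicalSpace G] (α : MulAut G) (hα : Continuous ⇑α)
    (hα' : Continuous ⇑(α⁻¹)) (k : ℤ) : Continuous ⇑(α ^ k) := by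
  induction k using Int.induction_on with
  | zero => exact continuous_id
  | succ n ih => rw [zpow_add_one]; exact ih.comp hα
  | pred n ih => rw [zpow_sub_one]; exact ih.comp hα'

theorem image_zpow_image_zpow (α : MulAut G) (j k : ℤ) (s : Set G) :
    ⇑(α ^ j) '' (⇑(α ^ k) '' s) = ⇑(α ^ (j + k)) '' s := by
  rw [image_image, zpow_add]; rfl

theorem isOpen_image_zpow [TopologicalSpace G] (α : MulAut G) (hα : Continuous ⇑α)
    (hα' : Continuous ⇑(α⁻¹)) {s : Set G} (hs : IsOpen s) (k : ℤ) : IsOpen (⇑(α ^ k) '' s) := by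
  have : ⇑(α ^ k) '' s = ⇑(α ^ (-k)) ⁻¹' s := by
    rw [zpow_neg]; exact (α ^ k).toEquiv.image_eq_preimage_symm s
  rw [this]
  exact hs.preimage (α.continuous_coe_zpow hα hα' _)

theorem image_zpow_iInter_image_zpow_neg (α : MulAut G) (s : Set G) (n : ℤ) :
    ⇑(α ^ n) '' ⋂ m : ℕ, ⇑(α ^ (-(m : ℤ))) '' s = ⋂ j ∈ Iic n, ⇑(α ^ j) '' s := by
  rw [image_iInter (α ^ n).bijective]
  simp only [image_zpow_image_zpow, ← sub_eq_add_neg]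
  ext x
  simp only [mem_iInter, mem_Iic]
  refine ⟨fun h j hj => ?_, fun h m => h _ (by omega)⟩
  simpa [Int.toNat_of_nonneg (sub_nonneg.mpr hj)] using h (n - j).toNat

end MulAut

theorem Set.biInter_Iic_eq_inter_biInter_Ioc {ι β : Type*} [LinearOrder ι] (B : ι → Set β)
    {a b : ι} (hab : a ≤ b) :
    ⋂ j ∈ Iic b, B j = (⋂ j ∈ Iic a, B j) ∩ ⋂ j ∈ Ioc a b, B j := by
  rw [← Iic_union_Ioc_eq_Iic hab, biInter_union]

theorem Set.iInter_biInter_Iic_natCast {β : Type*} (B : ℤ → Set β) :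
    ⋂ n : ℕ, ⋂ j ∈ Iic (n : ℤ), B j = ⋂ j, B j := by
  ext x
  simp only [mem_iInter, mem_Iic]
  exact ⟨fun h j => h j.toNat j (Int.self_le_toNat j), fun h _ j _ => h j⟩

theorem Filter.hasBasis_nhdsWithin_of_antitone_isCompact {X : Type*} [TopologicalSpace X]
    [T2Space X] {S : Set X} {x : X} {A : ℕ → Set X} (hA : Antitone A)
    (hcomp : ∀ n, IsCompact (A n)) (hinter : ⋂ n, A n = {x}) (hmem : ∀ n, A n ∈ 𝓝[S] x)
    (hsub : ∀ n, A n ⊆ S) : (𝓝[S] x).HasBasis (fun _ => True) A := by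
  refine ⟨fun t => ⟨fun ht => ?_, fun ⟨n, _, hn⟩ => mem_of_superset (hmem n) hn⟩⟩
  obtain ⟨U, hU, hUt⟩ := mem_nhdsWithin_iff_exists_mem_nhds_inter.mp ht
  obtain ⟨n, hn⟩ := exists_subset_nhds_of_isCompact' hA.directed_ge hcomp
    (fun n => (hcomp n).isClosed) (U := U) (by rw [hinter]; rintro _ rfl; exact hU)
  exact ⟨n, trivial, fun y hy => hUt ⟨hn hy, hsub n hy⟩⟩

theorem iterated_images_basis_general {G : Type*} [Group G] [TopologicalSpace G]
    [T2Space G]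
    (α : MulAut G) (hα : Continuous ⇑α) (hα' : Continuous ⇑(α⁻¹))
    (V : Subgroup G) (hVc : IsCompact (V : Set G)) (hVo : IsOpen (V : Set G))
    (hexp : ⋂ n : ℤ, ⇑(α ^ n) '' (V : Set G) = {1}) :
    (∀ n : ℕ, ⇑(α ^ (n : ℤ)) '' (⋂ m : ℕ, ⇑(α ^ (-(m : ℤ))) '' (V : Set G))
        ⊆ (⋂ m : ℕ, ⇑(α ^ (-(m : ℤ))) '' (V : Set G)) ∧
      (∃ S : Subgroup G, (S : Set G)
        = ⇑(α ^ (n : ℤ)) '' (⋂ m : ℕ, ⇑(α ^ (-(m : ℤ))) '' (V : Set G))) ∧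
      (∃ W : Set G, IsOpen W ∧
        ⇑(α ^ (n : ℤ)) '' (⋂ m : ℕ, ⇑(α ^ (-(m : ℤ))) '' (V : Set G))
          = (⋂ m : ℕ, ⇑(α ^ (-(m : ℤ))) '' (V : Set G)) ∩ W)) ∧
    (𝓝[⋂ m : ℕ, ⇑(α ^ (-(m : ℤ))) '' (V : Set G)] (1 : G)).HasBasis
      (fun _ : ℕ => True)
      (fun n : ℕ => ⇑(α ^ (n : ℤ)) '' (⋂ m : ℕ, ⇑(α ^ (-(m : ℤ))) '' (V : Set G))) := by
  have hcont := α.continuous_coe_zpow hα hα'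
  set Vm := ⋂ m : ℕ, ⇑(α ^ (-(m : ℤ))) '' (V : Set G)
  set W : ℕ → Set G := fun n => ⋂ j ∈ Ioc (0 : ℤ) n, ⇑(α ^ j) '' (V : Set G)
  have himage (n : ℕ) : ⇑(α ^ (n : ℤ)) '' Vm = ⋂ j ∈ Iic (n : ℤ), ⇑(α ^ j) '' (V : Set G) :=
    α.image_zpow_iInter_image_zpow_neg _ n
  have hsplit (n : ℕ) : ⇑(α ^ (n : ℤ)) '' Vm = Vm ∩ W n := by
    rw [himage, biInter_Iic_eq_inter_biInter_Ioc _ n.cast_nonneg, ← Nat.cast_zero, ← himage 0,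
      Nat.cast_zero, zpow_zero, MulAut.coe_one, image_id]
  have hWopen (n : ℕ) : IsOpen (W n) :=
    (finite_Ioc _ _).isOpen_biInter fun j _ => α.isOpen_image_zpow hα hα' hVo j
  have hWone (n : ℕ) : (1 : G) ∈ W n := mem_iInter₂.mpr fun j _ => ⟨1, V.one_mem, map_one _⟩
  have hcompact (n : ℕ) : IsCompact (⇑(α ^ (n : ℤ)) '' Vm) := by
    rw [himage]
    exact (hVc.image (hcont n)).of_isClosed_subset
      (isClosed_biInter fun j _ => (hVc.image (hcont j)).isClosed)
      (biInter_subset_of_mem self_mem_Iic)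
  refine ⟨fun n => ⟨hsplit n ▸ inter_subset_left, ?_, W n, hWopen n, hsplit n⟩, ?_⟩
  · refine ⟨(⨅ m : ℕ, V.map (α ^ (-(m : ℤ))).toMonoidHom).map (α ^ (n : ℤ)).toMonoidHom, ?_⟩
    simp only [Subgroup.coe_map, Subgroup.coe_iInf, MulEquiv.coe_toMonoidHom, Vm]
  refine hasBasis_nhdsWithin_of_antitone_isCompact (fun m n hmn => ?_) hcompact ?_
    (fun n => hsplit n ▸ inter_mem_nhdsWithin _ ((hWopen n).mem_nhds (hWone n)))
    (fun n => hsplit n ▸ inter_subset_left)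
  · simp only [himage]
    exact biInter_subset_biInter_left (Iic_subset_Iic.mpr (by exact_mod_cast hmn))
  · simp only [himage]
    rw [iInter_biInter_Iic_natCast, hexp]

/-- For an expansive automorphism with compact open subgroup V satisfying
`⋂_{n∈ℤ} αⁿ(V) = {1}` and `V₋ := ⋂_{n≥0} α⁻ⁿ(V)`: for each n, `αⁿ(V₋)` is a subgroup of
`V₋` that is relatively open in `V₋`, and the family `{αⁿ(V₋) : n ∈ ℕ}` is a
neighbourhood basis of the identity in `V₋`. -/
theorem iterated_images_basis {G : Type*} [Group G] [TopologicalSpace G]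
    [IsTopologicalGroup G] [T2Space G] [LocallyCompactSpace G] [TotallyDisconnectedSpace G]
    (α : MulAut G) (hα : Continuous ⇑α) (hα' : Continuous ⇑(α⁻¹))
    (V : Subgroup G) (hVc : IsCompact (V : Set G)) (hVo : IsOpen (V : Set G))
    (hexp : ⋂ n : ℤ, ⇑(α ^ n) '' (V : Set G) = {1}) :
    (∀ n : ℕ, ⇑(α ^ (n : ℤ)) '' (⋂ m : ℕ, ⇑(α ^ (-(m : ℤ))) '' (V : Set G))
        ⊆ (⋂ m : ℕ, ⇑(α ^ (-(m : ℤ))) '' (V : Set G)) ∧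
      (∃ S : Subgroup G, (S : Set G)
        = ⇑(α ^ (n : ℤ)) '' (⋂ m : ℕ, ⇑(α ^ (-(m : ℤ))) '' (V : Set G))) ∧
      (∃ W : Set G, IsOpen W ∧
        ⇑(α ^ (n : ℤ)) '' (⋂ m : ℕ, ⇑(α ^ (-(m : ℤ))) '' (V : Set G))
          = (⋂ m : ℕ, ⇑(α ^ (-(m : ℤ))) '' (V : Set G)) ∩ W)) ∧
    (𝓝[⋂ m : ℕ, ⇑(α ^ (-(m : ℤ))) '' (V : Set G)] (1 : G)).HasBasis
      (fun _ : ℕ => True)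
      (fun n : ℕ => ⇑(α ^ (n : ℤ)) '' (⋂ m : ℕ, ⇑(α ^ (-(m : ℤ))) '' (V : Set G))) :=
  iterated_images_basis_general α hα hα' V hVc hVo hexp
end

section
/- Let G be a totally disconnected, locally compact group, α an automorphism, N ⊆ G an α-stable closed normal subgroup and ᾱ the induced automorphism of G/N. If α|_N and ᾱ are both expansive, then α is expansive. -/
open Filter Topology

namespace MulAut

variable {G H : Type*} [Group G] [Group H]

theorem iInter_zpow_image (α : MulAut G) (S : Set G) :
    ⋂ n : ℤ, ⇑(α ^ n) '' S = ⋂ n : ℤ, ⇑(α ^ n) ⁻¹' S := by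
  have h (n : ℤ) : ⇑(α ^ n) '' S = ⇑(α ^ (-n)) ⁻¹' S := by
    rw [zpow_neg]
    exact (α ^ n).toEquiv.image_eq_preimage_symm S
  simp only [h]
  exact neg_surjective.iInter_comp fun n => ⇑(α ^ n) ⁻¹' S

theorem semiconj_zpow {α : MulAut G} {β : MulAut H} {f : G → H}
    (hf : Function.Semiconj f α β) (n : ℤ) : Function.Semiconj f ⇑(α ^ n) ⇑(β ^ n) := by
  induction n using Int.induction_on with
  | zero => exact Function.Semiconj.id_right
  | succ k ih =>
    rw [zpow_add_one, zpow_add_one]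
    exact ih.comp_right hf
  | pred k ih =>
    rw [zpow_sub_one, zpow_sub_one]
    exact ih.comp_right <| hf.inverses_right (α.apply_symm_apply ·) (β.symm_apply_apply ·)

/-- If the `α`-orbit of `g` stays in `V ∩ f ⁻¹' U`, the `β`-orbit of `f g` stays in `U`, so `f g = 1`;
the kernel is `α`-invariant because `f` intertwines `α` and `β`, so the orbit of `g` stays in
`V ∩ ker f`. -/
theorem iInter_zpow_image_inter_preimage_eq_one {α : MulAut G} {β : MulAut H} {f : G →* H}
    (hf : Function.Semiconj f α β) {V : Set G} {U : Set H}
    (hker : ⋂ n : ℤ, ⇑(α ^ n) '' (V ∩ f.ker) = {1}) (hquot : ⋂ n : ℤ, ⇑(β ^ n) '' U = {1}) :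
    ⋂ n : ℤ, ⇑(α ^ n) '' (V ∩ f ⁻¹' U) = {1} := by
  simp only [iInter_zpow_image, Set.ext_iff, Set.mem_iInter, Set.mem_preimage,
    Set.mem_singleton_iff] at hker hquot ⊢
  have hV : (1 : G) ∈ V := by simpa using (hker 1).2 rfl 0
  have hU : (1 : H) ∈ U := by simpa using (hquot 1).2 rfl 0
  intro g
  constructor
  · intro hg
    have hfg : f g = 1 := (hquot (f g)).1 fun n => semiconj_zpow hf n g ▸ (hg n).2
    refine (hker g).1 fun n => ⟨(hg n).1, ?_⟩
    rw [SetLike.mem_coe, MonoidHom.mem_ker, semiconj_zpow hf n g, hfg, map_one]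
  · rintro rfl n
    simpa using ⟨hV, hU⟩

end MulAut

theorem expansive_of_restriction_and_quotient_general {G : Type*} [Group G] [TopologicalSpace G]
    (α : MulAut G)
    (N : Subgroup G) [N.Normal]
    (β : MulAut (G ⧸ N))
    (hcompat : ∀ g : G, β ((g : G ⧸ N)) = ((α g : G) : G ⧸ N))
    (hN_exp : ∃ V ∈ 𝓝 (1 : G), ⋂ n : ℤ, ⇑(α ^ n) '' (V ∩ (N : Set G)) = {1})
    (hQ_exp : ∃ U ∈ 𝓝 (1 : G ⧸ N), ⋂ n : ℤ, ⇑(β ^ n) '' U = {1}) :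
    ∃ U ∈ 𝓝 (1 : G), ⋂ n : ℤ, ⇑(α ^ n) '' U = {1} := by
  obtain ⟨V, hV, hVexp⟩ := hN_exp
  obtain ⟨U, hU, hUexp⟩ := hQ_exp
  refine ⟨V ∩ QuotientGroup.mk ⁻¹' U,
    inter_mem hV (QuotientGroup.continuous_mk.continuousAt.preimage_mem_nhds hU), ?_⟩
  refine MulAut.iInter_zpow_image_inter_preimage_eq_one (f := QuotientGroup.mk' N)
    (fun g => (hcompat g).symm) ?_ hUexp
  rwa [QuotientGroup.ker_mk']

/-- If the restriction of α to a closed α-stable normal subgroup N and the induced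
automorphism of G/N are both expansive, then α is expansive. -/
theorem expansive_of_restriction_and_quotient {G : Type*} [Group G] [TopologicalSpace G]
    [IsTopologicalGroup G] [T2Space G] [LocallyCompactSpace G] [TotallyDisconnectedSpace G]
    (α : MulAut G) (hα : Continuous ⇑α) (hα' : Continuous ⇑(α⁻¹))
    (N : Subgroup G) [N.Normal] (hNc : IsClosed (N : Set G))
    (hNst : ⇑α '' (N : Set G) = (N : Set G))
    (β : MulAut (G ⧸ N)) (hβ : Continuous ⇑β) (hβ' : Continuous ⇑(β⁻¹))
    (hcompat : ∀ g : G, β ((g : G ⧸ N)) = ((α g : G) : G ⧸ N))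
    (hN_exp : ∃ V ∈ 𝓝 (1 : G), ⋂ n : ℤ, ⇑(α ^ n) '' (V ∩ (N : Set G)) = {1})
    (hQ_exp : ∃ U ∈ 𝓝 (1 : G ⧸ N), ⋂ n : ℤ, ⇑(β ^ n) '' U = {1}) :
    ∃ U ∈ 𝓝 (1 : G), ⋂ n : ℤ, ⇑(α ^ n) '' U = {1} :=
  expansive_of_restriction_and_quotient_general α N β hcompat hN_exp hQ_exp
end

section
/- Let H be the 3-dimensional p-adic Heisenberg group (ℚ_p³ with multiplication (x₁,y₁,z₁)(x₂,y₂,z₂) = (x₁+x₂, y₁+y₂, z₁+z₂+x₁y₂)) and define automorphisms α₁(x,y,z) = (px, p⁻²y, p⁻¹z) and α₂(x,y,z) = (p²x, p⁻¹y, pz). Let G = H × H and α = α₁ × α₂. Then U_α = {(x,0,0) : x ∈ ℚ_p} × {(a,0,c) : a, c ∈ ℚ_p}, U_{α⁻¹} = {(0,y,z) : y,z ∈ ℚ_p} × {(0,b,0) : b ∈ ℚ_p}, and U_α U_{α⁻¹} = G, but neither U_α normalizes U_{α⁻¹} nor U_{α⁻¹} normalizes U_α. -/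
/-!
Both automorphisms act diagonally on the coordinates `(x, y, z)`, so `αⁿ` multiplies each
coordinate by the `n`-th power of a fixed scalar; a coordinate tends to `0` iff that scalar has
norm `< 1` or the coordinate vanishes. Since `‖p‖ < 1`, this identifies `U_α` and `U_{α⁻¹}`.
Conjugation in `H` only shifts the central coordinate, by `a.x * g.y - g.x * a.y`, so conjugating
`(0,1,0)` by `(1,0,0)` (and vice versa) leaves the respective contraction group.
-/

open Filter Topology Pointwise

/-- The 3-dimensional p-adic Heisenberg group. -/
@[ext] structure Heis (p : ℕ) [Fact p.Prime] where
  x : ℚ_[p]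
  y : ℚ_[p]
  z : ℚ_[p]

namespace Heis

variable {p : ℕ} [Fact p.Prime]

noncomputable instance : TopologicalSpace (Heis p) :=
  TopologicalSpace.induced (fun h => (h.x, h.y, h.z)) inferInstance

noncomputable instance : Mul (Heis p) :=
  ⟨fun a b => ⟨a.x + b.x, a.y + b.y, a.z + b.z + a.x * b.y⟩⟩

noncomputable instance : One (Heis p) := ⟨⟨0, 0, 0⟩⟩

noncomputable instance : Inv (Heis p) := ⟨fun a => ⟨-a.x, -a.y, -a.z + a.x * a.y⟩⟩

@[simp] lemma mul_x (a b : Heis p) : (a * b).x = a.x + b.x := rfl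
@[simp] lemma mul_y (a b : Heis p) : (a * b).y = a.y + b.y := rfl
@[simp] lemma mul_z (a b : Heis p) : (a * b).z = a.z + b.z + a.x * b.y := rfl
@[simp] lemma one_x : (1 : Heis p).x = 0 := rfl
@[simp] lemma one_y : (1 : Heis p).y = 0 := rfl
@[simp] lemma one_z : (1 : Heis p).z = 0 := rfl
@[simp] lemma inv_x (a : Heis p) : a⁻¹.x = -a.x := rfl
@[simp] lemma inv_y (a : Heis p) : a⁻¹.y = -a.y := rfl
@[simp] lemma inv_z (a : Heis p) : a⁻¹.z = -a.z + a.x * a.y := rfl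

noncomputable instance : Group (Heis p) where
  mul_assoc a b c := by ext <;> simp <;> ring
  one_mul a := by ext <;> simp
  mul_one a := by ext <;> simp
  inv_mul_cancel a := by ext <;> simp <;> ring

/-- The automorphism `(x,y,z) ↦ (u x, v y, u v z)` of the Heisenberg group. -/
noncomputable def heisAut (u v : ℚ_[p]) (hu : u ≠ 0) (hv : v ≠ 0) : MulAut (Heis p) where
  toFun a := ⟨u * a.x, v * a.y, u * v * a.z⟩
  invFun a := ⟨u⁻¹ * a.x, v⁻¹ * a.y, (u * v)⁻¹ * a.z⟩
  left_inv a := by ext <;> field_simp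
  right_inv a := by ext <;> field_simp
  map_mul' a b := by ext <;> simp <;> ring

end Heis


/-- The group `U_β` of the paper. -/
def contractionSet {G : Type*} [Group G] [TopologicalSpace G] (β : MulAut G) : Set G :=
  {g | Tendsto (fun n : ℕ => (β ^ n) g) atTop (𝓝 1)}

lemma tendsto_pow_mul_nhds_zero_iff {𝕜 : Type*} [NormedDivisionRing 𝕜] (t c : 𝕜) :
    Tendsto (fun n : ℕ => t ^ n * c) atTop (𝓝 0) ↔ ‖t‖ < 1 ∨ c = 0 := by
  by_cases ht : ‖t‖ < 1
  · simpa [ht] using (tendsto_pow_atTop_nhds_zero_of_norm_lt_one ht).mul_const c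
  refine ⟨fun h => Or.inr ?_, fun h => ?_⟩
  · have hle : ∀ n : ℕ, ‖c‖ ≤ ‖t ^ n * c‖ := fun n => by
      rw [norm_mul, norm_pow]
      exact le_mul_of_one_le_left (norm_nonneg c) (one_le_pow₀ (not_lt.1 ht))
    exact norm_le_zero_iff.1 (ge_of_tendsto' (tendsto_norm_zero.comp h) hle)
  · simp [h.resolve_left ht]

namespace MulEquiv

variable {G H : Type*} [Group G] [Group H]

lemma prodCongr_pow_apply (e : MulAut G) (f : MulAut H) (n : ℕ) (g : G × H) :
    (prodCongr e f ^ n) g = ((e ^ n) g.1, (f ^ n) g.2) := by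
  induction n with
  | zero => rfl
  | succ n ih => simp only [pow_succ', MulAut.mul_apply, ih]; rfl

lemma prodCongr_inv (e : MulAut G) (f : MulAut H) :
    (prodCongr e f)⁻¹ = prodCongr e⁻¹ f⁻¹ := rfl

end MulEquiv

lemma contractionSet_prodCongr {G H : Type*} [Group G] [Group H] [TopologicalSpace G]
    [TopologicalSpace H] (e : MulAut G) (f : MulAut H) :
    contractionSet (MulEquiv.prodCongr e f) = contractionSet e ×ˢ contractionSet f := by
  ext g
  simp only [contractionSet, Set.mem_ofPred_eq, Set.mem_prod, MulEquiv.prodCongr_pow_apply,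
    Prod.tendsto_iff, Prod.fst_one, Prod.snd_one]

lemma not_forall_conj_image_eq {G : Type*} [Group G] {A B : Set G} {a g : G} (ha : a ∈ A)
    (hg : g ∈ B) (hconj : a * g * a⁻¹ ∉ B) : ¬ ∀ a ∈ A, (fun g => a * g * a⁻¹) '' B = B :=
  fun hAB => hconj (hAB a ha ▸ ⟨g, hg, rfl⟩)

namespace Heis

variable {p : ℕ} [Fact p.Prime]

lemma tendsto_nhds_one_iff {ι : Type*} {l : Filter ι} {f : ι → Heis p} :
    Tendsto f l (𝓝 1) ↔ Tendsto (fun i => (f i).x) l (𝓝 0) ∧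
      Tendsto (fun i => (f i).y) l (𝓝 0) ∧ Tendsto (fun i => (f i).z) l (𝓝 0) := by
  rw [nhds_induced, tendsto_comap_iff]
  exact (Prod.tendsto_iff _ _).trans (and_congr_right' (Prod.tendsto_iff _ _))

lemma heisAut_pow_apply (u v : ℚ_[p]) (hu : u ≠ 0) (hv : v ≠ 0) (n : ℕ) (a : Heis p) :
    (heisAut u v hu hv ^ n) a = ⟨u ^ n * a.x, v ^ n * a.y, (u * v) ^ n * a.z⟩ := by
  induction n with
  | zero => ext <;> simp
  | succ n ih =>
    rw [pow_succ', MulAut.mul_apply, ih]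
    ext <;> simp only [heisAut, MulEquiv.coe_mk, Equiv.coe_fn_mk] <;> ring

lemma heisAut_inv (u v : ℚ_[p]) (hu : u ≠ 0) (hv : v ≠ 0) :
    (heisAut u v hu hv)⁻¹ = heisAut u⁻¹ v⁻¹ (inv_ne_zero hu) (inv_ne_zero hv) := by
  ext a <;> simp [MulAut.inv_def, heisAut, mul_comm]

lemma contractionSet_heisAut (u v : ℚ_[p]) (hu : u ≠ 0) (hv : v ≠ 0) :
    contractionSet (heisAut u v hu hv) =
      {a | (‖u‖ < 1 ∨ a.x = 0) ∧ (‖v‖ < 1 ∨ a.y = 0) ∧ (‖u * v‖ < 1 ∨ a.z = 0)} := by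
  ext a
  simp only [contractionSet, Set.mem_ofPred_eq, heisAut_pow_apply, tendsto_nhds_one_iff,
    tendsto_pow_mul_nhds_zero_iff]

lemma mul_conj (a g : Heis p) : a * g * a⁻¹ = ⟨g.x, g.y, g.z + a.x * g.y - g.x * a.y⟩ := by
  ext <;> simp; ring

lemma setOf_y_z_eq_zero_mul_setOf_x_eq_zero :
    {h : Heis p | h.y = 0 ∧ h.z = 0} * {h | h.x = 0} = Set.univ :=
  Set.eq_univ_of_forall fun a =>
    ⟨⟨a.x, 0, 0⟩, ⟨rfl, rfl⟩, ⟨0, a.y, a.z - a.x * a.y⟩, rfl, by ext <;> simp⟩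

lemma setOf_y_eq_zero_mul_setOf_x_z_eq_zero :
    {h : Heis p | h.y = 0} * {h | h.x = 0 ∧ h.z = 0} = Set.univ :=
  Set.eq_univ_of_forall fun a =>
    ⟨⟨a.x, 0, a.z - a.x * a.y⟩, rfl, ⟨0, a.y, 0⟩, ⟨rfl, rfl⟩, by ext <;> simp⟩

end Heis

open Heis in
/-- For the expansive automorphism `α = α₁ × α₂` of `H × H` (H the p-adic Heisenberg group),
with `α₁(x,y,z) = (px, p⁻²y, p⁻¹z)` and `α₂(x,y,z) = (p²x, p⁻¹y, pz)`, one has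
`U_α = {(x,0,0)} × {(a,0,c)}`, `U_{α⁻¹} = {(0,y,z)} × {(0,b,0)}`, `U_α U_{α⁻¹} = G`, but
neither of `U_α`, `U_{α⁻¹}` normalizes the other. -/
theorem heisenberg_product_not_normalizing (p : ℕ) [Fact p.Prime]
    (hp : (p : ℚ_[p]) ≠ 0)
    (α : MulAut (Heis p × Heis p))
    (hα : α = MulEquiv.prodCongr
      (heisAut (p : ℚ_[p]) ((p : ℚ_[p]) ^ 2)⁻¹ hp (by simp [hp]))
      (heisAut ((p : ℚ_[p]) ^ 2) ((p : ℚ_[p]))⁻¹ (by simp [hp]) (by simp [hp])))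
    (Uα Uα' : Set (Heis p × Heis p))
    (hUα : Uα = {g : Heis p × Heis p | Tendsto (fun n : ℕ => (α ^ n) g) atTop (𝓝 1)})
    (hUα' : Uα' = {g : Heis p × Heis p | Tendsto (fun n : ℕ => (α⁻¹ ^ n) g) atTop (𝓝 1)}) :
    Uα = {h : Heis p | h.y = 0 ∧ h.z = 0} ×ˢ {h : Heis p | h.y = 0} ∧
    Uα' = {h : Heis p | h.x = 0} ×ˢ {h : Heis p | h.x = 0 ∧ h.z = 0} ∧
    Uα * Uα' = Set.univ ∧
    ¬ (∀ a ∈ Uα, (fun g => a * g * a⁻¹) '' Uα' = Uα') ∧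
    ¬ (∀ b ∈ Uα', (fun g => b * g * b⁻¹) '' Uα = Uα) := by
  have hp1 : 1 < (p : ℝ) := by exact_mod_cast (Fact.out : p.Prime).one_lt
  have hU : Uα = {h : Heis p | h.y = 0 ∧ h.z = 0} ×ˢ {h : Heis p | h.y = 0} := by
    have e₁ : (p : ℚ_[p]) * ((p : ℚ_[p]) ^ 2)⁻¹ = (p : ℚ_[p])⁻¹ := by field_simp
    have e₂ : (p : ℚ_[p]) ^ 2 * (p : ℚ_[p])⁻¹ = p := by field_simp
    change Uα = contractionSet α at hUα
    rw [hUα, hα, contractionSet_prodCongr, contractionSet_heisAut, contractionSet_heisAut, e₁, e₂]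
    simp [Padic.norm_p, hp1, inv_lt_one_of_one_lt₀, one_lt_pow₀, (Fact.out : p.Prime).ne_zero]
  have hU' : Uα' = {h : Heis p | h.x = 0} ×ˢ {h : Heis p | h.x = 0 ∧ h.z = 0} := by
    have e₁ : (p : ℚ_[p])⁻¹ * ((p : ℚ_[p]) ^ 2)⁻¹⁻¹ = p := by field_simp
    have e₂ : ((p : ℚ_[p]) ^ 2)⁻¹ * (p : ℚ_[p])⁻¹⁻¹ = (p : ℚ_[p])⁻¹ := by field_simp
    change Uα' = contractionSet α⁻¹ at hUα'
    rw [hUα', hα, MulEquiv.prodCongr_inv, heisAut_inv, heisAut_inv, contractionSet_prodCongr,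
      contractionSet_heisAut, contractionSet_heisAut, e₁, e₂]
    simp [Padic.norm_p, hp1, inv_lt_one_of_one_lt₀, one_lt_pow₀, (Fact.out : p.Prime).ne_zero]
  refine ⟨hU, hU', ?_, ?_, ?_⟩ <;> rw [hU, hU']
  · rw [Set.prod_mul_prod_comm, setOf_y_z_eq_zero_mul_setOf_x_eq_zero,
      setOf_y_eq_zero_mul_setOf_x_z_eq_zero, Set.univ_prod_univ]
  · refine not_forall_conj_image_eq (a := (1, ⟨1, 0, 0⟩)) (g := (1, ⟨0, 1, 0⟩))
      ⟨⟨rfl, rfl⟩, rfl⟩ ⟨rfl, rfl, rfl⟩ ?_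
    simp [Prod.mul_def, mul_conj]
  · refine not_forall_conj_image_eq (a := (⟨0, 1, 0⟩, 1)) (g := (⟨1, 0, 0⟩, 1))
      ⟨rfl, rfl, rfl⟩ ⟨⟨rfl, rfl⟩, rfl⟩ ?_
    simp [Prod.mul_def, mul_conj]
end

section
/- Let F be a nontrivial finite abelian group, H₁ = F^(⁻ℕ) × F^(ℕ₀) (the restricted product: sequences indexed by ℤ that vanish for sufficiently negative indices, i.e. elements (f_n)_{n∈ℤ} of F^ℤ with f_n = 1 for all but finitely many n < 0), with F^(ℕ₀) := F^{ℕ₀} compact open, and similarly H₂ = F^{−ℕ} × F^(ℕ₀-restricted) with vanishing at sufficiently positive indices. Let α be the right-shift on G := H₁ × H₂. Then the map q : G → F^ℤ, (f, g) ↦ f + g is a continuous, open, surjective homomorphism with discrete kernel, and the contraction group U_{ᾱ} of the right-shift ᾱ on F^ℤ equals {(f_n) ∈ F^ℤ : f_n = 1 for all but finitely many n < 0}, which is a dense proper (hence non-closed) subgroup of F^ℤ. -/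
open Filter Topology

section

variable (F : Type*) [AddCommGroup F] [Fintype F] [Nontrivial F]
  [TopologicalSpace F] [DiscreteTopology F]

/-- Restricted product `F^(−ℕ) × F^(ℕ₀)`: sequences vanishing at all but finitely many
negative indices; the negative part is discrete, the nonnegative part compact. -/
abbrev RestrProdLeft := ({n : ℤ // n < 0} →₀ F) × ({n : ℤ // 0 ≤ n} → F)

/-- Restricted product `F^{−ℕ} × F^(ℕ₀)`: sequences vanishing at all but finitely many
nonnegative indices; the negative part is compact, the nonnegative part discrete. -/
abbrev RestrProdRight := ({n : ℤ // n < 0} → F) × ({n : ℤ // 0 ≤ n} →₀ F)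

noncomputable instance : TopologicalSpace ({n : ℤ // n < 0} →₀ F) := ⊥
noncomputable instance : TopologicalSpace ({n : ℤ // 0 ≤ n} →₀ F) := ⊥

/-- Interpreting an element of `H₁` as a two-sided sequence. -/
noncomputable def emb₁ (h : RestrProdLeft F) : ℤ → F := fun n =>
  if hn : n < 0 then h.1 ⟨n, hn⟩ else h.2 ⟨n, not_lt.1 hn⟩

/-- Interpreting an element of `H₂` as a two-sided sequence. -/
noncomputable def emb₂ (h : RestrProdRight F) : ℤ → F := fun n =>
  if hn : n < 0 then h.1 ⟨n, hn⟩ else h.2 ⟨n, not_lt.1 hn⟩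

/-- The addition map `q : G = H₁ × H₂ → F^ℤ`. -/
noncomputable def qmap (g : RestrProdLeft F × RestrProdRight F) : ℤ → F :=
  emb₁ F g.1 + emb₂ F g.2

/-- The right shift on `F^ℤ`. -/
def rshift (f : ℤ → F) : ℤ → F := fun n => f (n - 1)

end

/-!
A sequence `f` is `q` of the element whose compact coordinates are `f` (its nonnegative part in
`H₁`, its negative part in `H₂`) and whose discrete coordinates vanish. This continuous section,
translated around any point of `G`, makes `q` open and surjective; and an element of the kernel
is determined by its two discrete coordinates, so the kernel is discrete.

Since `F` is discrete, `ᾱᵏ f → 0` means `f (n - k) = 0` for each `n` and all large `k`, i.e. `f`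
vanishes near `-∞`. Truncating any sequence far to the left stays in this set, so it is dense;
a nonzero constant sequence is not in it, so it is not closed.
-/

section Sequences

variable {F : Type*}

theorem rshift_iterate_apply (f : ℤ → F) (k : ℕ) (n : ℤ) :
    (rshift F)^[k] f n = f (n - k) := by
  induction k generalizing f with
  | zero => simp
  | succ k ih =>
    rw [Function.iterate_succ_apply, ih]
    simp only [rshift, Nat.cast_succ, sub_sub]

theorem finite_neg_support_iff_eventually_atBot [Zero F] (f : ℤ → F) :
    {n : ℤ | n < 0 ∧ f n ≠ 0}.Finite ↔ ∀ᶠ n in atBot, f n = 0 := by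
  constructor
  · intro h
    obtain ⟨a, ha⟩ := h.bddBelow
    filter_upwards [eventually_lt_atBot a, eventually_lt_atBot 0] with n hna hn0
    by_contra hfn
    exact (ha ⟨hn0, hfn⟩).not_gt hna
  · intro h
    obtain ⟨b, hb⟩ := eventually_atBot.1 h
    refine (Set.finite_Icc b 0).subset fun n ⟨hn, hfn⟩ => ⟨?_, hn.le⟩
    by_contra hbn
    exact hfn (hb n (not_le.1 hbn).le)

theorem tendsto_rshift_iterate_nhds_zero_iff [Zero F] [TopologicalSpace F] [DiscreteTopology F]
    (f : ℤ → F) :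
    Tendsto (fun k : ℕ => (rshift F)^[k] f) atTop (𝓝 0) ↔ ∀ᶠ n in atBot, f n = 0 := by
  simp only [tendsto_pi_nhds, Pi.zero_apply, nhds_discrete, tendsto_pure, rshift_iterate_apply]
  constructor
  · intro h
    obtain ⟨K, hK⟩ := eventually_atTop.1 (h 0)
    refine eventually_atBot.2 ⟨-K, fun n hn => ?_⟩
    simpa [Int.toNat_of_nonneg (by omega : 0 ≤ -n)] using hK (-n).toNat (by omega)
  · intro h n
    have hshift : Tendsto (fun k : ℕ => n - (k : ℤ)) atTop atBot := by
      simpa only [sub_eq_add_neg, Function.comp_def] using tendsto_atBot_add_const_left _ n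
        (tendsto_neg_atTop_atBot.comp tendsto_natCast_atTop_atTop)
    exact hshift.eventually h

theorem dense_setOf_eventually_atBot_eq_zero [Zero F] [TopologicalSpace F] :
    Dense {f : ℤ → F | ∀ᶠ n in atBot, f n = 0} := by
  intro f
  have htrunc : Tendsto (fun k : ℕ => (Set.Ici (-(k : ℤ))).indicator f) atTop (𝓝 f) := by
    refine tendsto_pi_nhds.2 fun n => tendsto_nhds_of_eventually_eq ?_
    filter_upwards [eventually_ge_atTop (-n).toNat] with k hk
    exact Set.indicator_of_mem (by simp only [Set.mem_Ici]; omega) f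
  refine mem_closure_of_tendsto htrunc (Eventually.of_forall fun k => ?_)
  filter_upwards [eventually_lt_atBot (-(k : ℤ))] with n hn
  exact Set.indicator_of_notMem (by simpa using hn) f

theorem setOf_eventually_atBot_eq_zero_ne_univ [Zero F] [Nontrivial F] :
    {f : ℤ → F | ∀ᶠ n in atBot, f n = 0} ≠ Set.univ := by
  obtain ⟨a, ha⟩ := exists_ne (0 : F)
  intro h
  have hconst : (fun _ => a) ∈ {f : ℤ → F | ∀ᶠ n in atBot, f n = 0} := h ▸ Set.mem_univ _
  obtain ⟨_, ha0⟩ := hconst.exists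
  exact ha ha0

end Sequences

theorem AddMonoidHom.isOpenMap_of_continuous_rightInverse {G H : Type*} [AddGroup G]
    [AddGroup H] [TopologicalSpace G] [ContinuousAdd G] [TopologicalSpace H] (q : G →+ H)
    {s : H → G} (hs : Continuous s) (hqs : Function.RightInverse s q) : IsOpenMap q :=
  IsOpenMap.of_sections fun x => ⟨fun z => x - s (q x) + s z,
    (continuous_const.add hs).continuousAt, by simp, fun z => by simp [hqs z, hqs (q x)]⟩

section RestrictedProducts

variable {F : Type*} [AddCommGroup F]

instance : DiscreteTopology ({n : ℤ // n < 0} →₀ F) := ⟨rfl⟩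
instance : DiscreteTopology ({n : ℤ // 0 ≤ n} →₀ F) := ⟨rfl⟩

theorem emb₁_of_neg (h : RestrProdLeft F) {n : ℤ} (hn : n < 0) :
    emb₁ F h n = h.1 ⟨n, hn⟩ := dif_pos hn

theorem emb₁_of_nonneg (h : RestrProdLeft F) {n : ℤ} (hn : 0 ≤ n) :
    emb₁ F h n = h.2 ⟨n, hn⟩ := dif_neg hn.not_gt

theorem emb₂_of_neg (h : RestrProdRight F) {n : ℤ} (hn : n < 0) :
    emb₂ F h n = h.1 ⟨n, hn⟩ := dif_pos hn

theorem emb₂_of_nonneg (h : RestrProdRight F) {n : ℤ} (hn : 0 ≤ n) :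
    emb₂ F h n = h.2 ⟨n, hn⟩ := dif_neg hn.not_gt

theorem qmap_add (a b : RestrProdLeft F × RestrProdRight F) :
    qmap F (a + b) = qmap F a + qmap F b := by
  funext n
  rcases lt_or_ge n 0 with hn | hn
  · simp only [qmap, Pi.add_apply, emb₁_of_neg _ hn, emb₂_of_neg _ hn, Prod.fst_add,
      Prod.snd_add, Finsupp.add_apply]
    abel
  · simp only [qmap, Pi.add_apply, emb₁_of_nonneg _ hn, emb₂_of_nonneg _ hn, Prod.fst_add,
      Prod.snd_add, Finsupp.add_apply]
    abel

variable (F) in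
noncomputable def qmapHom : RestrProdLeft F × RestrProdRight F →+ (ℤ → F) :=
  AddMonoidHom.mk' (qmap F) qmap_add

noncomputable def qmapSection (f : ℤ → F) : RestrProdLeft F × RestrProdRight F :=
  ((0, fun n => f n), (fun n => f n, 0))

theorem qmap_qmapSection (f : ℤ → F) : qmap F (qmapSection f) = f := by
  funext n
  rcases lt_or_ge n 0 with hn | hn
  · simp [qmap, qmapSection, emb₁_of_neg _ hn, emb₂_of_neg _ hn]
  · simp [qmap, qmapSection, emb₁_of_nonneg _ hn, emb₂_of_nonneg _ hn]

theorem eq_zero_of_qmap_eq_zero {y : RestrProdLeft F × RestrProdRight F} (hy : qmap F y = 0)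
    (h₁ : y.1.1 = 0) (h₂ : y.2.2 = 0) : y = 0 := by
  refine Prod.ext (Prod.ext h₁ (funext fun m => ?_)) (Prod.ext (funext fun m => ?_) h₂)
  · have hm := congrFun hy m
    simpa [qmap, emb₁_of_nonneg _ m.2, emb₂_of_nonneg _ m.2, h₂] using hm
  · have hm := congrFun hy m
    simpa [qmap, emb₁_of_neg _ m.2, emb₂_of_neg _ m.2, h₁] using hm

variable [TopologicalSpace F]

theorem continuous_emb₁ : Continuous (emb₁ F) := by
  refine continuous_pi fun n => ?_
  rcases lt_or_ge n 0 with hn | hn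
  · simp only [emb₁_of_neg _ hn]
    exact (continuous_of_discreteTopology
      (f := fun x : {m : ℤ // m < 0} →₀ F => x ⟨n, hn⟩)).comp continuous_fst
  · simp only [emb₁_of_nonneg _ hn]
    exact (continuous_apply _).comp continuous_snd

theorem continuous_emb₂ : Continuous (emb₂ F) := by
  refine continuous_pi fun n => ?_
  rcases lt_or_ge n 0 with hn | hn
  · simp only [emb₂_of_neg _ hn]
    exact (continuous_apply _).comp continuous_fst
  · simp only [emb₂_of_nonneg _ hn]
    exact (continuous_of_discreteTopology
      (f := fun x : {m : ℤ // 0 ≤ m} →₀ F => x ⟨n, hn⟩)).comp continuous_snd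

theorem continuous_qmapSection : Continuous (qmapSection (F := F)) := by
  unfold qmapSection
  fun_prop

theorem discreteTopology_qmap_preimage_zero : DiscreteTopology ↥(qmap F ⁻¹' {0}) := by
  refine DiscreteTopology.of_continuous_injective
    (f := fun y : ↥(qmap F ⁻¹' {0}) => (y.1.1.1, y.1.2.2)) (by fun_prop) ?_
  rintro ⟨y, hy⟩ ⟨y', hy'⟩ h
  obtain ⟨h₁, h₂⟩ := Prod.mk.inj h
  rw [Subtype.mk.injEq, ← sub_eq_zero]
  refine eq_zero_of_qmap_eq_zero ?_ (sub_eq_zero.2 h₁) (sub_eq_zero.2 h₂)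
  rw [Set.mem_preimage, Set.mem_singleton_iff] at hy hy'
  change qmapHom F (y - y') = 0
  rw [map_sub, sub_eq_zero]
  exact hy.trans hy'.symm

variable [DiscreteTopology F]

theorem continuous_qmap : Continuous (qmap F) :=
  (continuous_emb₁.comp continuous_fst).add (continuous_emb₂.comp continuous_snd)

end RestrictedProducts

theorem restricted_product_shift_general (F : Type*) [AddCommGroup F] [Nontrivial F]
    [TopologicalSpace F] [DiscreteTopology F] :
    (∀ a b : RestrProdLeft F × RestrProdRight F, qmap F (a + b) = qmap F a + qmap F b) ∧
    Continuous (qmap F) ∧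
    IsOpenMap (qmap F) ∧
    Function.Surjective (qmap F) ∧
    DiscreteTopology ↥(qmap F ⁻¹' {0}) ∧
    {f : ℤ → F | Tendsto (fun k : ℕ => (rshift F)^[k] f) atTop (𝓝 0)}
      = {f : ℤ → F | {n : ℤ | n < 0 ∧ f n ≠ 0}.Finite} ∧
    Dense {f : ℤ → F | {n : ℤ | n < 0 ∧ f n ≠ 0}.Finite} ∧
    {f : ℤ → F | {n : ℤ | n < 0 ∧ f n ≠ 0}.Finite} ≠ Set.univ ∧
    ¬ IsClosed {f : ℤ → F | {n : ℤ | n < 0 ∧ f n ≠ 0}.Finite} := by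
  have hS : {f : ℤ → F | {n : ℤ | n < 0 ∧ f n ≠ 0}.Finite} = {f | ∀ᶠ n in atBot, f n = 0} :=
    Set.ext finite_neg_support_iff_eventually_atBot
  have hdense : Dense {f : ℤ → F | ∀ᶠ n in atBot, f n = 0} :=
    dense_setOf_eventually_atBot_eq_zero
  have hproper := setOf_eventually_atBot_eq_zero_ne_univ (F := F)
  rw [hS]
  refine ⟨qmap_add, continuous_qmap,
    (qmapHom F).isOpenMap_of_continuous_rightInverse continuous_qmapSection qmap_qmapSection,
    fun f => ⟨qmapSection f, qmap_qmapSection f⟩, discreteTopology_qmap_preimage_zero,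
    Set.ext tendsto_rshift_iterate_nhds_zero_iff, hdense, hproper, fun hclosed => hproper ?_⟩
  rw [← hclosed.closure_eq, hdense.closure_eq]

/-- `q : G → F^ℤ` is a continuous, open, surjective homomorphism with discrete kernel,
and the contraction group of the right shift on `F^ℤ` is the set of sequences vanishing
at all but finitely many negative indices; it is a dense, proper, non-closed subgroup. -/
theorem restricted_product_shift (F : Type*) [AddCommGroup F] [Fintype F] [Nontrivial F]
    [TopologicalSpace F] [DiscreteTopology F] :
    (∀ a b : RestrProdLeft F × RestrProdRight F, qmap F (a + b) = qmap F a + qmap F b) ∧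
    Continuous (qmap F) ∧
    IsOpenMap (qmap F) ∧
    Function.Surjective (qmap F) ∧
    DiscreteTopology ↥(qmap F ⁻¹' {0}) ∧
    {f : ℤ → F | Tendsto (fun k : ℕ => (rshift F)^[k] f) atTop (𝓝 0)}
      = {f : ℤ → F | {n : ℤ | n < 0 ∧ f n ≠ 0}.Finite} ∧
    Dense {f : ℤ → F | {n : ℤ | n < 0 ∧ f n ≠ 0}.Finite} ∧
    {f : ℤ → F | {n : ℤ | n < 0 ∧ f n ≠ 0}.Finite} ≠ Set.univ ∧
    ¬ IsClosed {f : ℤ → F | {n : ℤ | n < 0 ∧ f n ≠ 0}.Finite} :=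
  restricted_product_shift_general F
end
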